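/- Let V = {v₁, …, v_m} ⊂ ℝⁿ be a finite set, γ ≥ 0, and let B_γ(v) denote the closed γ-ball in the ℓ∞-norm around v. Let V^γ be the union of the vertex sets of the hypercubes B_γ(vᵢ), i = 1, …, m. Then the convex hull of V^γ equals the closed γ-neighborhood (in ℓ∞) of the convex hull of V, i.e., conv(V^γ) = { z : ∃ v ∈ conv(V), ‖z − v‖_∞ ≤ γ }. -/

import Mathlib

/-!
The vertex set is the Minkowski sum `V + γ • {±1}ⁿ`. Convex hulls commute with Minkowski sums and
with scaling, and the convex hull of the sign vectors `{±1}ⁿ` is the product of the segments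
`[-1, 1]`, i.e. the unit ball of the sup norm. Hence `conv(V^γ) = conv V + closedBall 0 γ`.
-/

open Set Metric Pointwise

section SignVectors

variable {ι : Type*}

def signVectors : Set (ι → ℝ) := univ.pi fun _ => {1, -1}

variable [Fintype ι]

theorem convexHull_signVectors : convexHull ℝ (signVectors : Set (ι → ℝ)) = closedBall 0 1 := by
  rw [signVectors, convexHull_pi, closedBall_pi _ zero_le_one]
  refine pi_congr rfl fun _ _ => ?_
  rw [convexHull_pair, segment_symm, segment_eq_Icc (by norm_num), Pi.zero_apply,
    Real.closedBall_eq_Icc, zero_sub, zero_add]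

theorem convexHull_add_smul_signVectors (s : Set (ι → ℝ)) (γ : ℝ) :
    convexHull ℝ (s + γ • signVectors) = convexHull ℝ s + closedBall 0 |γ| := by
  rw [convexHull_add, convexHull_smul, convexHull_signVectors, smul_unitClosedBall,
    Real.norm_eq_abs]

end SignVectors

theorem mem_add_closedBall_zero_iff {E : Type*} [SeminormedAddCommGroup E] {s : Set E} {r : ℝ}
    {z : E} : z ∈ s + closedBall 0 r ↔ ∃ v ∈ s, ‖z - v‖ ≤ r := by
  simp only [mem_add, mem_closedBall_zero_iff]
  constructor
  · rintro ⟨v, hv, w, hw, rfl⟩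
    exact ⟨v, hv, by rwa [add_sub_cancel_left]⟩
  · rintro ⟨v, hv, hz⟩
    exact ⟨v, hv, z - v, hz, add_sub_cancel v z⟩

/-- For a finite V ⊂ ℝⁿ with the ℓ∞ norm, the convex hull of the vertices of
the γ-hypercubes around the points of V equals the closed γ-neighborhood (in ℓ∞) of conv V. -/
theorem stmt9 {n : ℕ} (V : Finset (Fin n → ℝ)) (γ : ℝ) (hγ : 0 ≤ γ) :
    convexHull ℝ
        {w : Fin n → ℝ | ∃ v ∈ V, ∃ s : Fin n → ℝ, (∀ i, s i = 1 ∨ s i = -1) ∧ w = v + γ • s}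
      = {z : Fin n → ℝ | ∃ v ∈ convexHull ℝ (V : Set (Fin n → ℝ)), ‖z - v‖ ≤ γ} := by
  have vertices_eq :
      {w : Fin n → ℝ | ∃ v ∈ V, ∃ s : Fin n → ℝ, (∀ i, s i = 1 ∨ s i = -1) ∧ w = v + γ • s}
        = (V : Set (Fin n → ℝ)) + γ • signVectors := by
    ext w
    simp only [signVectors, mem_ofPred_eq, mem_add, mem_smul_set, mem_pi, mem_univ,
      forall_const, mem_insert_iff, mem_singleton_iff]
    constructor
    · rintro ⟨v, hv, s, hs, rfl⟩
      exact ⟨v, hv, γ • s, ⟨s, hs, rfl⟩, rfl⟩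
    · rintro ⟨v, hv, _, ⟨s, hs, rfl⟩, rfl⟩
      exact ⟨v, hv, s, hs, rfl⟩
  rw [vertices_eq, convexHull_add_smul_signVectors, abs_of_nonneg hγ]
  ext z
  exact mem_add_closedBall_zero_iff
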